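/- arXiv:1812.06207 — 3 statements merged into one kernel-verified Lean document; each statement's English description precedes it below -/
import Mathlib

section
/- Let A_N be an N×N upper bidiagonal matrix (A_N has nonzero entries only on the main diagonal and the first superdiagonal) and let X, Y ⊂ [N] with |X| = |Y|. Then det(A_N[X; Y]) equals the product of the diagonal entries of the square matrix A_N[X; Y]. -/
open Finset Matrix

noncomputable section

/-- **Lemma A.2.** The determinant of any square submatrix `A[X;Y]` of an upper bidiagonal
matrix `A` equals the product of the diagonal entries of `A[X;Y]`. -/
theorem det_submatrix_bidiagonal
    {N : ℕ} (A : Matrix (Fin N) (Fin N) ℂ)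
    (hbd : ∀ i j : Fin N, (j : ℕ) ≠ (i : ℕ) → (j : ℕ) ≠ (i : ℕ) + 1 → A i j = 0)
    (X Y : Finset (Fin N)) (h : X.card = Y.card) :
    (A.submatrix (fun i : Fin X.card => ((X.orderIsoOfFin rfl i : Fin N)))
                 (fun j : Fin X.card => ((Y.orderIsoOfFin h.symm j : Fin N)))).det
      = ∏ i : Fin X.card, A (X.orderIsoOfFin rfl i) (Y.orderIsoOfFin h.symm i) := by
  set x : Fin X.card → Fin N := fun i => (X.orderIsoOfFin rfl i : Fin N) with hxdef
  set y : Fin X.card → Fin N := fun j => (Y.orderIsoOfFin h.symm j : Fin N) with hydef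
  have hx : StrictMono x := fun a b hab => by
    simpa [hxdef, Subtype.coe_lt_coe] using (X.orderIsoOfFin rfl).lt_iff_lt.2 hab
  have hy : StrictMono y := fun a b hab => by
    simpa [hydef, Subtype.coe_lt_coe] using (Y.orderIsoOfFin h.symm).lt_iff_lt.2 hab
  rw [Matrix.det_apply]
  rw [Finset.sum_eq_single (1 : Equiv.Perm (Fin X.card))]
  · simp [Matrix.submatrix_apply, hxdef, hydef, Finset.coe_orderIsoOfFin_apply]
  · intro σ _ hσ
    by_contra hne
    have hprod : ∏ i, A (x (σ i)) (y i) ≠ 0 := by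
      intro h0
      apply hne
      simp [Matrix.submatrix_apply, h0]
    have hall : ∀ i, A (x (σ i)) (y i) ≠ 0 := by
      intro i hi
      exact hprod (Finset.prod_eq_zero (Finset.mem_univ i) hi)
    have hkey : ∀ i, (x (σ i) : ℕ) ≤ (y i : ℕ) ∧ (y i : ℕ) ≤ (x (σ i) : ℕ) + 1 := by
      intro i
      by_cases h1 : (y i : ℕ) = (x (σ i) : ℕ)
      · omega
      by_cases h2 : (y i : ℕ) = (x (σ i) : ℕ) + 1
      · omega
      exact absurd (hbd _ _ h1 h2) (hall i)
    have hmono : StrictMono (⇑σ) := by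
      intro i j hij
      rcases lt_trichotomy (σ i) (σ j) with hlt | heq | hgt
      · exact hlt
      · exact absurd (σ.injective heq) hij.ne
      · exfalso
        have h1 := (hkey j).2
        have h2 := (hkey i).1
        have h3 : (x (σ j) : ℕ) < (x (σ i) : ℕ) := hx hgt
        have h4 : (y i : ℕ) < (y j : ℕ) := hy hij
        omega
    apply hσ
    haveI : WellFoundedLT (Fin X.card) := inferInstance
    have : ⇑σ = id := (StrictMono.range_inj hmono strictMono_id).1
      (by rw [σ.surjective.range_eq, Set.range_id])
    ext i
    simp [this]
  · intro h1
    exact absurd (Finset.mem_univ _) h1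
end
end

section
/- Let A_N = J_N + 𝔷·Id_N with 𝔷 ∈ ℂ, where J_N is the N×N nilpotent matrix with (J_N)_{i,j} = 1 if j = i+1 and 0 otherwise. Let X = {x_1 < x_2 < ⋯ < x_k} ⊂ [N] and Y = {y_1 < y_2 < ⋯ < y_k} ⊂ [N], and set y_{k+1} = ∞. Then det(A_N[X^c; Y^c]) = 𝔷^{y_1 - 1} · (Π_{i=2}^k 𝔷^{y_i - x_{i-1} - 1}) · 𝔷^{N - x_k} · 1{ y_i ≤ x_i < y_{i+1} for all i ∈ [k] }. -/
open Finset Matrix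

noncomputable section

lemma aux_card_filter_val_lt (N t : ℕ) (ht : t ≤ N) :
    ((univ : Finset (Fin N)).filter (fun s => s.val < t)).card = t := by
  rcases eq_or_lt_of_le ht with h | h
  · subst h
    rw [filter_true_of_mem (fun s _ => s.isLt), card_univ, Fintype.card_fin]
  · have he : (univ : Finset (Fin N)).filter (fun s => s.val < t) = Finset.Iio ⟨t, h⟩ := by
      ext s; simp [Fin.lt_def]
    rw [he, Fin.card_Iio]

lemma aux_strictMono_lt_iff_card {N n : ℕ} {f : Fin n → Fin N} (hf : StrictMono f)
    (a : Fin n) (t : ℕ) :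
    (f a : ℕ) < t ↔ (a : ℕ) < ((univ : Finset (Fin n)).filter (fun b => ((f b : ℕ) < t))).card := by
  constructor
  · intro h
    have hsub : Finset.Iic a ⊆ univ.filter (fun b => (f b : ℕ) < t) := by
      intro b hb
      simp only [mem_Iic] at hb
      simp only [mem_filter, mem_univ, true_and]
      exact lt_of_le_of_lt (show (f b : ℕ) ≤ (f a : ℕ) from hf.monotone hb) h
    have := Finset.card_le_card hsub
    rw [Fin.card_Iic] at this
    omega
  · intro h
    by_contra hlt
    push_neg at hlt
    have hsub : univ.filter (fun b => (f b : ℕ) < t) ⊆ Finset.Iio a := by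
      intro b hb
      simp only [mem_filter, mem_univ, true_and] at hb
      simp only [mem_Iio]
      by_contra hba
      push_neg at hba
      have : (f a : ℕ) ≤ (f b : ℕ) := hf.monotone hba
      omega
    have := Finset.card_le_card hsub
    rw [Fin.card_Iio] at this
    omega

lemma aux_image_orderIso {N n : ℕ} (s : Finset (Fin N)) (h : s.card = n) :
    univ.image (fun a : Fin n => ((s.orderIsoOfFin h a : Fin N))) = s := by
  ext t
  simp only [mem_image, mem_univ, true_and]
  constructor
  · rintro ⟨a, rfl⟩
    exact (s.orderIsoOfFin h a).2
  · intro ht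
    exact ⟨(s.orderIsoOfFin h).symm ⟨t, ht⟩, by simp⟩

lemma aux_compl_count {N n : ℕ} {f : Fin n → Fin N} (hf : StrictMono f) (t : ℕ) (ht : t ≤ N) :
    (((univ.image f)ᶜ : Finset (Fin N)).filter (fun s => s.val < t)).card
      + ((univ : Finset (Fin n)).filter (fun b => ((f b : ℕ) < t))).card = t := by
  classical
  have h1 : ((univ.image f : Finset (Fin N)).filter (fun s => s.val < t)).card
      = ((univ : Finset (Fin n)).filter (fun b => ((f b : ℕ) < t))).card := by
    rw [Finset.filter_image, Finset.card_image_of_injective _ hf.injective]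
  have h2 : ((univ.image f : Finset (Fin N))ᶜ.filter (fun s => s.val < t)).card
      + ((univ.image f : Finset (Fin N)).filter (fun s => s.val < t)).card
      = ((univ : Finset (Fin N)).filter (fun s => s.val < t)).card := by
    rw [← Finset.card_union_of_disjoint
        (Finset.disjoint_filter_filter (disjoint_compl_left)),
      ← Finset.filter_union, Finset.union_comm, Finset.union_compl]
  rw [aux_card_filter_val_lt N t ht] at h2
  omega

lemma aux_perm_eq_one {N n : ℕ} {r c : Fin n → Fin N} (hr : StrictMono r) (hc : StrictMono c)
    (σ : Equiv.Perm (Fin n))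
    (h : ∀ i, (c i : ℕ) = (r (σ i) : ℕ) ∨ (c i : ℕ) = (r (σ i) : ℕ) + 1) : σ = 1 := by
  classical
  by_contra hσ
  have hne : ∃ i, σ i ≠ i := by
    by_contra hfix
    push_neg at hfix
    exact hσ (Equiv.ext fun i => hfix i)
  have hsne : (univ.filter (fun i => σ i ≠ i)).Nonempty :=
    ⟨hne.choose, by simp [hne.choose_spec]⟩
  obtain ⟨i₀, hmem0, hmin0⟩ := Finset.exists_min_image _ id hsne
  simp only [mem_filter, mem_univ, true_and] at hmem0
  have hmin : ∀ j, j < i₀ → σ j = j := by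
    intro j hj
    by_contra hjj
    exact absurd (hmin0 j (by simp [hjj])) (not_le.mpr hj)
  have h1 : i₀ < σ i₀ := by
    rcases lt_trichotomy (σ i₀) i₀ with hl | he | hg
    · have hfix : σ (σ i₀) = σ i₀ := hmin _ hl
      exact absurd (σ.injective hfix) hmem0
    · exact absurd he hmem0
    · exact hg
  have hσi₁ : σ (σ.symm i₀) = i₀ := σ.apply_symm_apply i₀
  have h2 : i₀ < σ.symm i₀ := by
    rcases lt_trichotomy (σ.symm i₀) i₀ with hl | he | hg
    · have h3 := hmin _ hl
      rw [hσi₁] at h3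
      exact absurd hl (by rw [← h3]; exact lt_irrefl i₀)
    · rw [he] at hσi₁
      exact absurd hσi₁ hmem0
    · exact hg
  have hA : (r (σ i₀) : ℕ) ≤ (c i₀ : ℕ) := by rcases h i₀ with h' | h' <;> omega
  have hB : (c (σ.symm i₀) : ℕ) ≤ (r i₀ : ℕ) + 1 := by
    have h4 := h (σ.symm i₀)
    rw [hσi₁] at h4
    rcases h4 with h' | h' <;> omega
  have hr1 : (r i₀ : ℕ) < (r (σ i₀) : ℕ) := hr h1
  have hc1 : (c i₀ : ℕ) < (c (σ.symm i₀) : ℕ) := hc h2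
  omega

/-- `subdet A X Y` is the determinant of the submatrix `A[X;Y]` of `A` with rows indexed by
`X` and columns by `Y`, both in increasing order (`0` by convention if `|X| ≠ |Y|`). -/
def subdet {R : Type*} [CommRing R] {N : ℕ} (A : Matrix (Fin N) (Fin N) R)
    (X Y : Finset (Fin N)) : R :=
  if h : X.card = Y.card then
    (A.submatrix (fun i : Fin X.card => ((X.orderIsoOfFin rfl i : Fin N)))
                 (fun j : Fin X.card => ((Y.orderIsoOfFin h.symm j : Fin N)))).det
  else 0

/-- The `N×N` upper shift (nilpotent Jordan) matrix. -/
def Jmat (N : ℕ) : Matrix (Fin N) (Fin N) ℂ :=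
  Matrix.of fun i j => if (j : ℕ) = (i : ℕ) + 1 then 1 else 0

lemma aux_det_bidiag {N n : ℕ} (𝔷 : ℂ) (r c : Fin n → Fin N)
    (hr : StrictMono r) (hc : StrictMono c) :
    ((Jmat N + 𝔷 • 1).submatrix r c).det = ∏ a, (Jmat N + 𝔷 • 1) (r a) (c a) := by
  classical
  rw [Matrix.det_apply]
  rw [Finset.sum_eq_single (1 : Equiv.Perm (Fin n))]
  · simp [Matrix.submatrix_apply]
  · intro σ _ hσ
    have hex : ∃ i, ¬((c i : ℕ) = (r (σ i) : ℕ) ∨ (c i : ℕ) = (r (σ i) : ℕ) + 1) := by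
      by_contra hall
      push_neg at hall
      refine hσ (aux_perm_eq_one hr hc σ ?_)
      intro i
      have := hall i
      tauto
    obtain ⟨i, hi⟩ := hex
    push_neg at hi
    have hzero : (Jmat N + 𝔷 • 1).submatrix r c (σ i) i = 0 := by
      simp only [Matrix.submatrix_apply, Matrix.add_apply, Matrix.smul_apply, Matrix.one_apply,
        Jmat, Matrix.of_apply, smul_eq_mul]
      rw [if_neg hi.2, if_neg]
      · ring
      · intro he
        exact hi.1 (by rw [he])
    have hp : ∏ j, (Jmat N + 𝔷 • 1).submatrix r c (σ j) j = 0 :=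
      Finset.prod_eq_zero (mem_univ i) hzero
    rw [hp, smul_zero]
  · intro h; exact absurd (mem_univ 1) h

def auxCnt {n N : ℕ} (f : Fin n → Fin N) (t : ℕ) : ℕ :=
  ((univ : Finset (Fin n)).filter (fun b => ((f b : ℕ) < t))).card

lemma aux_lt_iff {N n : ℕ} {f : Fin n → Fin N} (hf : StrictMono f) (a : Fin n) (t : ℕ) :
    (f a : ℕ) < t ↔ (a : ℕ) < auxCnt f t :=
  aux_strictMono_lt_iff_card hf a t

lemma aux_cnt_le {N n : ℕ} (f : Fin n → Fin N) (t : ℕ) : auxCnt f t ≤ n := by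
  refine le_trans (Finset.card_filter_le _ _) ?_
  simp

lemma aux_cnt_compl {N n p : ℕ} {f : Fin n → Fin N} {r : Fin p → Fin N}
    (hf : StrictMono f) (hr : StrictMono r) (him : univ.image r = (univ.image f)ᶜ)
    (t : ℕ) (ht : t ≤ N) : auxCnt r t + auxCnt f t = t := by
  classical
  have h1 := aux_compl_count hf t ht
  have h2 : ((univ.image r : Finset (Fin N)).filter (fun s => s.val < t)).card = auxCnt r t := by
    rw [Finset.filter_image, Finset.card_image_of_injective _ hr.injective]
    rfl
  rw [him] at h2
  rw [h2] at h1
  exact h1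

/-- Forward: interlacing implies the diagonal-band condition on the complement enumerations. -/
lemma aux_fwd {N k m : ℕ} {x y : Fin k → Fin N} {r c : Fin m → Fin N}
    (hx : StrictMono x) (hy : StrictMono y) (hr : StrictMono r) (hc : StrictMono c)
    (himr : univ.image r = (univ.image x)ᶜ) (himc : univ.image c = (univ.image y)ᶜ)
    (hI : ∀ i : Fin k, y i ≤ x i ∧ ∀ h : (i : ℕ) + 1 < k, x i < y ⟨(i : ℕ) + 1, h⟩) :
    ∀ a : Fin m, (r a : ℕ) ≤ (c a : ℕ) ∧ (c a : ℕ) ≤ (r a : ℕ) + 1 := by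
  have hL1 : ∀ t, auxCnt x t ≤ auxCnt y t := by
    intro t
    apply Finset.card_le_card
    intro i hi
    simp only [mem_filter, mem_univ, true_and] at hi ⊢
    have h1 : (y i : ℕ) ≤ (x i : ℕ) := (hI i).1
    omega
  have hL2 : ∀ t, auxCnt y (t + 1) ≤ auxCnt x t + 1 := by
    intro t
    obtain ⟨j, hjdef⟩ : ∃ j, auxCnt y (t + 1) = j := ⟨_, rfl⟩
    rw [hjdef]
    rcases Nat.lt_or_ge j 2 with h2 | h2
    · omega
    · have hjk : j ≤ k := hjdef ▸ aux_cnt_le y (t + 1)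
      have hj1 : j - 1 < k := by omega
      have hj2 : j - 2 < k := by omega
      have hy1 : (y ⟨j - 1, hj1⟩ : ℕ) < t + 1 := by
        refine (aux_lt_iff hy ⟨j - 1, hj1⟩ (t + 1)).mpr ?_
        rw [hjdef]
        show j - 1 < j
        omega
      have hlt : ((⟨j - 2, hj2⟩ : Fin k) : ℕ) + 1 < k := by
        show j - 2 + 1 < k
        omega
      have hstepv : (x ⟨j - 2, hj2⟩ : ℕ) < (y ⟨j - 2 + 1, hlt⟩ : ℕ) :=
        (hI ⟨j - 2, hj2⟩).2 hlt
      have hyeq : (⟨j - 2 + 1, hlt⟩ : Fin k) = ⟨j - 1, hj1⟩ := Fin.ext (by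
        show j - 2 + 1 = j - 1
        omega)
      rw [hyeq] at hstepv
      have hxlt : (x ⟨j - 2, hj2⟩ : ℕ) < t := by omega
      have hfin : j - 2 < auxCnt x t := (aux_lt_iff hx ⟨j - 2, hj2⟩ t).mp hxlt
      omega
  intro a
  have hcntr : ∀ t, t ≤ N → auxCnt r t + auxCnt x t = t :=
    fun t ht => aux_cnt_compl hx hr himr t ht
  have hcntc : ∀ t, t ≤ N → auxCnt c t + auxCnt y t = t :=
    fun t ht => aux_cnt_compl hy hc himc t ht
  constructor
  · have ht : (c a : ℕ) + 1 ≤ N := (c a).isLt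
    have h1 : (a : ℕ) < auxCnt c ((c a : ℕ) + 1) :=
      (aux_lt_iff hc a ((c a : ℕ) + 1)).mp (by omega)
    have e1 := hcntr ((c a : ℕ) + 1) ht
    have e2 := hcntc ((c a : ℕ) + 1) ht
    have hl1 := hL1 ((c a : ℕ) + 1)
    have h2 : (a : ℕ) < auxCnt r ((c a : ℕ) + 1) := by omega
    have h3 := (aux_lt_iff hr a ((c a : ℕ) + 1)).mpr h2
    omega
  · rcases Nat.lt_or_ge ((r a : ℕ) + 2) (N + 1) with hle | hgt
    · have ht1 : (r a : ℕ) + 1 ≤ N := by omega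
      have h1 : (a : ℕ) < auxCnt r ((r a : ℕ) + 1) :=
        (aux_lt_iff hr a ((r a : ℕ) + 1)).mp (by omega)
      have e1 := hcntr ((r a : ℕ) + 1) ht1
      have e2 := hcntc ((r a : ℕ) + 2) (by omega)
      have hl2 : auxCnt y ((r a : ℕ) + 2) ≤ auxCnt x ((r a : ℕ) + 1) + 1 :=
        hL2 ((r a : ℕ) + 1)
      have h2 : (a : ℕ) < auxCnt c ((r a : ℕ) + 2) := by omega
      have h3 := (aux_lt_iff hc a ((r a : ℕ) + 2)).mpr h2
      omega
    · have h1 := (c a).isLt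
      have h2 := (r a).isLt
      omega

/-- Backward: the band condition on the complement enumerations implies interlacing. -/
lemma aux_bwd {N k m : ℕ} {x y : Fin k → Fin N} {r c : Fin m → Fin N}
    (hx : StrictMono x) (hy : StrictMono y) (hr : StrictMono r) (hc : StrictMono c)
    (himr : univ.image r = (univ.image x)ᶜ) (himc : univ.image c = (univ.image y)ᶜ)
    (hP : ∀ a : Fin m, (r a : ℕ) ≤ (c a : ℕ) ∧ (c a : ℕ) ≤ (r a : ℕ) + 1) :
    ∀ i : Fin k, y i ≤ x i ∧ ∀ h : (i : ℕ) + 1 < k, x i < y ⟨(i : ℕ) + 1, h⟩ := by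
  have hcntr : ∀ t, t ≤ N → auxCnt r t + auxCnt x t = t :=
    fun t ht => aux_cnt_compl hx hr himr t ht
  have hcntc : ∀ t, t ≤ N → auxCnt c t + auxCnt y t = t :=
    fun t ht => aux_cnt_compl hy hc himc t ht
  intro i
  constructor
  · by_contra hxy
    push_neg at hxy
    have hxyv : (x i : ℕ) < (y i : ℕ) := hxy
    have ht : (y i : ℕ) ≤ N := le_of_lt (y i).isLt
    have h1 : (i : ℕ) < auxCnt x (y i : ℕ) := (aux_lt_iff hx i _).mp hxyv
    have h2 : auxCnt y (y i : ℕ) ≤ (i : ℕ) := by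
      by_contra hcon
      push_neg at hcon
      have := (aux_lt_iff hy i _).mpr hcon
      omega
    have e1 := hcntr (y i : ℕ) ht
    have e2 := hcntc (y i : ℕ) ht
    have hcm := aux_cnt_le c (y i : ℕ)
    have ham : auxCnt r (y i : ℕ) < m := by omega
    have hca : (c ⟨auxCnt r (y i : ℕ), ham⟩ : ℕ) < (y i : ℕ) := by
      refine (aux_lt_iff hc ⟨auxCnt r (y i : ℕ), ham⟩ _).mpr ?_
      show auxCnt r (y i : ℕ) < auxCnt c (y i : ℕ)
      omega
    have hra : ¬ ((r ⟨auxCnt r (y i : ℕ), ham⟩ : ℕ) < (y i : ℕ)) := by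
      intro hcon
      have h4 : auxCnt r (y i : ℕ) < auxCnt r (y i : ℕ) :=
        (aux_lt_iff hr ⟨auxCnt r (y i : ℕ), ham⟩ _).mp hcon
      omega
    have := (hP ⟨auxCnt r (y i : ℕ), ham⟩).1
    omega
  · intro h
    by_contra hxy
    push_neg at hxy
    have hxyv : (y ⟨(i : ℕ) + 1, h⟩ : ℕ) ≤ (x i : ℕ) := hxy
    have ht : (x i : ℕ) + 1 ≤ N := (x i).isLt
    have hxle : auxCnt x ((x i : ℕ) + 1) ≤ (i : ℕ) + 1 := by
      by_contra hcon
      push_neg at hcon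
      have h5 : (x ⟨(i : ℕ) + 1, h⟩ : ℕ) < (x i : ℕ) + 1 := by
        refine (aux_lt_iff hx ⟨(i : ℕ) + 1, h⟩ ((x i : ℕ) + 1)).mpr ?_
        show (i : ℕ) + 1 < auxCnt x ((x i : ℕ) + 1)
        omega
      have h6 : (x i : ℕ) < (x ⟨(i : ℕ) + 1, h⟩ : ℕ) := hx (by
        show (i : ℕ) < (i : ℕ) + 1
        omega)
      omega
    have hyge : (i : ℕ) + 1 < auxCnt y ((x i : ℕ) + 1) :=
      (aux_lt_iff hy ⟨(i : ℕ) + 1, h⟩ _).mp (by omega)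
    have hxge : (i : ℕ) < auxCnt x ((x i : ℕ) + 1) := (aux_lt_iff hx i _).mp (by omega)
    have e1 := hcntr ((x i : ℕ) + 1) ht
    have e2 := hcntc ((x i : ℕ) + 1) ht
    have ht' : (x i : ℕ) ≤ N := by omega
    have e1' := hcntr (x i : ℕ) ht'
    have hxle' : auxCnt x (x i : ℕ) ≤ (i : ℕ) := by
      by_contra hcon
      push_neg at hcon
      have := (aux_lt_iff hx i (x i : ℕ)).mpr hcon
      omega
    have hrm := aux_cnt_le r ((x i : ℕ) + 1)
    have ham : (x i : ℕ) + 1 - (i : ℕ) - 2 < m := by omega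
    have hnc : ¬ ((c ⟨(x i : ℕ) + 1 - (i : ℕ) - 2, ham⟩ : ℕ) < (x i : ℕ) + 1) := by
      intro hcon
      have h7 : (x i : ℕ) + 1 - (i : ℕ) - 2 < auxCnt c ((x i : ℕ) + 1) :=
        (aux_lt_iff hc ⟨(x i : ℕ) + 1 - (i : ℕ) - 2, ham⟩ _).mp hcon
      omega
    have hra : (r ⟨(x i : ℕ) + 1 - (i : ℕ) - 2, ham⟩ : ℕ) < (x i : ℕ) := by
      refine (aux_lt_iff hr ⟨(x i : ℕ) + 1 - (i : ℕ) - 2, ham⟩ (x i : ℕ)).mpr ?_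
      show (x i : ℕ) + 1 - (i : ℕ) - 2 < auxCnt r (x i : ℕ)
      omega
    have := (hP ⟨(x i : ℕ) + 1 - (i : ℕ) - 2, ham⟩).2
    omega
/-- **Lemma A.3.** For `A = J_N + 𝔷·Id` and `X = {x_1 < ⋯ < x_k}`, `Y = {y_1 < ⋯ < y_k}`
(written here 0-indexed, via strictly monotone tuples `x y : Fin k → Fin N`),
`det(A[Xᶜ;Yᶜ]) = 𝔷^{y_1-1} (∏_{i=2}^k 𝔷^{y_i - x_{i-1} - 1}) 𝔷^{N-x_k}` if the interlacing
condition `y_i ≤ x_i < y_{i+1}` (with `y_{k+1} = ∞`) holds, and `0` otherwise. -/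
theorem det_submatrix_jordan_shift
    {N k : ℕ} (hk : 0 < k) (𝔷 : ℂ) (x y : Fin k → Fin N)
    (hx : StrictMono x) (hy : StrictMono y) :
    ((∀ i : Fin k, y i ≤ x i ∧ ∀ h : (i : ℕ) + 1 < k, x i < y ⟨(i : ℕ) + 1, h⟩) →
        subdet (Jmat N + 𝔷 • 1) ((Finset.univ.image x)ᶜ) ((Finset.univ.image y)ᶜ)
          = 𝔷 ^ ((y ⟨0, hk⟩ : ℕ)) *
            (∏ i ∈ Finset.univ.filter (fun i : Fin k => 0 < (i : ℕ)),
              𝔷 ^ ((y i : ℕ) - (x ⟨(i : ℕ) - 1, lt_of_le_of_lt (Nat.sub_le _ _) i.isLt⟩ : ℕ) - 1)) *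
            𝔷 ^ (N - 1 - (x ⟨k - 1, Nat.sub_lt hk one_pos⟩ : ℕ))) ∧
      ((¬ ∀ i : Fin k, y i ≤ x i ∧ ∀ h : (i : ℕ) + 1 < k, x i < y ⟨(i : ℕ) + 1, h⟩) →
        subdet (Jmat N + 𝔷 • 1) ((Finset.univ.image x)ᶜ) ((Finset.univ.image y)ᶜ) = 0) := by
  classical
  have hxcard : (univ.image x : Finset (Fin N)).card = k := by
    rw [Finset.card_image_of_injective _ hx.injective, card_univ, Fintype.card_fin]
  have hycard : (univ.image y : Finset (Fin N)).card = k := by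
    rw [Finset.card_image_of_injective _ hy.injective, card_univ, Fintype.card_fin]
  have hkN : k ≤ N := by
    have h0 := Finset.card_le_univ (univ.image x)
    rw [hxcard] at h0
    simpa using h0
  have hcc : ((univ.image x)ᶜ : Finset (Fin N)).card = ((univ.image y)ᶜ : Finset (Fin N)).card := by
    rw [Finset.card_compl, Finset.card_compl, hxcard, hycard]
  have hmval : ((univ.image x)ᶜ : Finset (Fin N)).card = N - k := by
    rw [Finset.card_compl, hxcard, Fintype.card_fin]
  set r : Fin ((univ.image x)ᶜ : Finset (Fin N)).card → Fin N :=
    fun a => ((((univ.image x)ᶜ : Finset (Fin N)).orderIsoOfFin rfl a : Fin N)) with hrdef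
  set c : Fin ((univ.image x)ᶜ : Finset (Fin N)).card → Fin N :=
    fun a => ((((univ.image y)ᶜ : Finset (Fin N)).orderIsoOfFin hcc.symm a : Fin N)) with hcdef
  have hsubdet : subdet (Jmat N + 𝔷 • 1) ((univ.image x)ᶜ) ((univ.image y)ᶜ)
      = ((Jmat N + 𝔷 • 1).submatrix r c).det := by
    rw [subdet, dif_pos hcc]
  have hrmono : StrictMono r := by
    rw [hrdef]
    intro a b hab
    exact Subtype.coe_lt_coe.mpr ((OrderIso.lt_iff_lt _).mpr hab)
  have hcmono : StrictMono c := by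
    rw [hcdef]
    intro a b hab
    exact Subtype.coe_lt_coe.mpr ((OrderIso.lt_iff_lt _).mpr hab)
  have himr : univ.image r = ((univ.image x)ᶜ : Finset (Fin N)) := by
    rw [hrdef]; exact aux_image_orderIso _ rfl
  have himc : univ.image c = ((univ.image y)ᶜ : Finset (Fin N)) := by
    rw [hcdef]; exact aux_image_orderIso _ hcc.symm
  constructor
  · intro hI
    have hP := aux_fwd hx hy hrmono hcmono himr himc hI
    rw [hsubdet, aux_det_bidiag 𝔷 r c hrmono hcmono]
    have hentry : ∀ a, (Jmat N + 𝔷 • 1) (r a) (c a) = 𝔷 ^ ((r a : ℕ) + 1 - (c a : ℕ)) := by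
      intro a
      have hpa := hP a
      simp only [Matrix.add_apply, Matrix.smul_apply, Matrix.one_apply, Jmat, Matrix.of_apply,
        smul_eq_mul]
      rcases Nat.eq_or_lt_of_le hpa.1 with he | hlt
      · rw [if_neg (by omega), if_pos (Fin.ext he)]
        have h9 : (r a : ℕ) + 1 - (c a : ℕ) = 1 := by omega
        rw [h9]; ring
      · have hce : (c a : ℕ) = (r a : ℕ) + 1 := by omega
        rw [if_pos hce, if_neg (fun hfe => by
          have h8 : (r a : ℕ) = (c a : ℕ) := congrArg Fin.val hfe
          omega)]
        have h9 : (r a : ℕ) + 1 - (c a : ℕ) = 0 := by omega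
        rw [h9]; ring
    rw [Finset.prod_congr rfl (fun a _ => hentry a), Finset.prod_pow_eq_pow_sum,
      Finset.prod_pow_eq_pow_sum, ← pow_add, ← pow_add]
    congr 1
    -- the exponent identity, proved in ℤ
    apply @Nat.cast_injective ℤ _ _
    have hcast1 : ((∑ a, ((r a : ℕ) + 1 - (c a : ℕ)) : ℕ) : ℤ)
        = ∑ a, (((r a : ℕ) : ℤ) + 1 - ((c a : ℕ) : ℤ)) := by
      rw [Nat.cast_sum]
      refine Finset.sum_congr rfl ?_
      intro a _
      have := (hP a).2
      omega
    have hsum_r : (∑ a, ((r a : ℕ) : ℤ)) = (∑ s : Fin N, ((s : ℕ) : ℤ)) - ∑ i, ((x i : ℕ) : ℤ) := by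
      have h1 : ∑ s ∈ univ.image r, ((s : ℕ) : ℤ) = ∑ a, ((r a : ℕ) : ℤ) :=
        Finset.sum_image (fun a _ b _ hab => hrmono.injective hab)
      have h2 : ∑ s ∈ univ.image x, ((s : ℕ) : ℤ) = ∑ i, ((x i : ℕ) : ℤ) :=
        Finset.sum_image (fun a _ b _ hab => hx.injective hab)
      have h3 := Finset.sum_compl_add_sum (univ.image x) (fun s : Fin N => ((s : ℕ) : ℤ))
      rw [himr] at h1
      rw [← h1, ← h2, ← h3]
      ring
    have hsum_c : (∑ a, ((c a : ℕ) : ℤ)) = (∑ s : Fin N, ((s : ℕ) : ℤ)) - ∑ i, ((y i : ℕ) : ℤ) := by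
      have h1 : ∑ s ∈ univ.image c, ((s : ℕ) : ℤ) = ∑ a, ((c a : ℕ) : ℤ) :=
        Finset.sum_image (fun a _ b _ hab => hcmono.injective hab)
      have h2 : ∑ s ∈ univ.image y, ((s : ℕ) : ℤ) = ∑ i, ((y i : ℕ) : ℤ) :=
        Finset.sum_image (fun a _ b _ hab => hy.injective hab)
      have h3 := Finset.sum_compl_add_sum (univ.image y) (fun s : Fin N => ((s : ℕ) : ℤ))
      rw [himc] at h1
      rw [← h1, ← h2, ← h3]
      ring
    have hL : ((∑ a, ((r a : ℕ) + 1 - (c a : ℕ)) : ℕ) : ℤ)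
        = (N : ℤ) - (k : ℤ) + (∑ i, ((y i : ℕ) : ℤ)) - ∑ i, ((x i : ℕ) : ℤ) := by
      rw [hcast1, Finset.sum_sub_distrib, Finset.sum_add_distrib, Finset.sum_const,
        hsum_r, hsum_c, card_univ, Fintype.card_fin, hmval]
      have h5 : ((N - k : ℕ) : ℤ) = (N : ℤ) - (k : ℤ) := by omega
      rw [nsmul_eq_mul, mul_one, h5]
      ring
    have hfe : univ.filter (fun i : Fin k => 0 < (i : ℕ)) = univ.erase ⟨0, hk⟩ := by
      ext i
      simp only [mem_filter, mem_univ, true_and, Finset.mem_erase, and_true]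
      constructor
      · intro h0 hcon
        rw [hcon] at h0
        exact absurd h0 (lt_irrefl 0)
      · intro hne
        by_contra h0
        push_neg at h0
        exact hne (Fin.ext (by show (i : ℕ) = 0; omega))
    have hcast2 : ∀ i ∈ univ.filter (fun i : Fin k => 0 < (i : ℕ)),
        (((y i : ℕ) - (x ⟨(i : ℕ) - 1, lt_of_le_of_lt (Nat.sub_le _ _) i.isLt⟩ : ℕ) - 1 : ℕ) : ℤ)
        = ((y i : ℕ) : ℤ) - ((x ⟨(i : ℕ) - 1, lt_of_le_of_lt (Nat.sub_le _ _) i.isLt⟩ : ℕ) : ℤ)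
          - 1 := by
      intro i hi
      simp only [mem_filter, mem_univ, true_and] at hi
      have hik := i.isLt
      have hlt1 : ((⟨(i : ℕ) - 1, lt_of_le_of_lt (Nat.sub_le _ _) i.isLt⟩ : Fin k) : ℕ) + 1 < k := by
        show (i : ℕ) - 1 + 1 < k
        omega
      have hs := (hI ⟨(i : ℕ) - 1, lt_of_le_of_lt (Nat.sub_le _ _) i.isLt⟩).2 hlt1
      have heq : (⟨((⟨(i : ℕ) - 1, lt_of_le_of_lt (Nat.sub_le _ _) i.isLt⟩ : Fin k) : ℕ) + 1,
          hlt1⟩ : Fin k) = i := Fin.ext (by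
        show (i : ℕ) - 1 + 1 = (i : ℕ)
        omega)
      rw [heq] at hs
      have hvs : (x ⟨(i : ℕ) - 1, lt_of_le_of_lt (Nat.sub_le _ _) i.isLt⟩ : ℕ) < (y i : ℕ) := hs
      omega
    have hy0 : ∑ i ∈ univ.filter (fun i : Fin k => 0 < (i : ℕ)), ((y i : ℕ) : ℤ)
        = (∑ i, ((y i : ℕ) : ℤ)) - ((y ⟨0, hk⟩ : ℕ) : ℤ) := by
      rw [hfe, Finset.sum_erase_eq_sub (mem_univ _)]
    have hx1 : ∑ i ∈ univ.filter (fun i : Fin k => 0 < (i : ℕ)),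
          ((x ⟨(i : ℕ) - 1, lt_of_le_of_lt (Nat.sub_le _ _) i.isLt⟩ : ℕ) : ℤ)
        = (∑ i, ((x i : ℕ) : ℤ)) - ((x ⟨k - 1, Nat.sub_lt hk one_pos⟩ : ℕ) : ℤ) := by
      rw [← Finset.sum_erase_eq_sub (mem_univ (⟨k - 1, Nat.sub_lt hk one_pos⟩ : Fin k))]
      refine Finset.sum_bij
        (fun i _ => (⟨(i : ℕ) - 1, lt_of_le_of_lt (Nat.sub_le _ _) i.isLt⟩ : Fin k)) ?_ ?_ ?_ ?_
      · intro a ha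
        simp only [mem_filter, mem_univ, true_and] at ha
        simp only [Finset.mem_erase, mem_univ, and_true]
        intro hcontra
        have h7 := congrArg Fin.val hcontra
        simp only [] at h7
        have h8 := a.isLt
        show False
        have h9 : (a : ℕ) - 1 = k - 1 := h7
        omega
      · intro a ha b hb hab
        simp only [mem_filter, mem_univ, true_and] at ha hb
        have h7 : (a : ℕ) - 1 = (b : ℕ) - 1 := congrArg Fin.val hab
        exact Fin.ext (by omega)
      · intro b hb
        simp only [Finset.mem_erase, mem_univ, and_true] at hb
        have hbk0 : (b : ℕ) ≠ k - 1 := fun hc => hb (Fin.ext hc)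
        have hbk : (b : ℕ) + 1 < k := by
          have := b.isLt
          omega
        refine ⟨⟨(b : ℕ) + 1, hbk⟩, ?_, ?_⟩
        · simp only [mem_filter, mem_univ, true_and]
          show 0 < (b : ℕ) + 1
          omega
        · exact Fin.ext (by
            show (b : ℕ) + 1 - 1 = (b : ℕ)
            omega)
      · intro a ha
        rfl
    have hone : (∑ _i ∈ univ.filter (fun i : Fin k => 0 < (i : ℕ)), (1 : ℤ)) = (k : ℤ) - 1 := by
      rw [Finset.sum_const, hfe, Finset.card_erase_of_mem (mem_univ _), card_univ,
        Fintype.card_fin, nsmul_eq_mul, mul_one]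
      omega
    have hfilter_sum :
        ((∑ i ∈ univ.filter (fun i : Fin k => 0 < (i : ℕ)),
            ((y i : ℕ) - (x ⟨(i : ℕ) - 1, lt_of_le_of_lt (Nat.sub_le _ _) i.isLt⟩ : ℕ) - 1) : ℕ) : ℤ)
        = (∑ i, ((y i : ℕ) : ℤ)) - ((y ⟨0, hk⟩ : ℕ) : ℤ)
          - ((∑ i, ((x i : ℕ) : ℤ)) - ((x ⟨k - 1, Nat.sub_lt hk one_pos⟩ : ℕ) : ℤ))
          - ((k : ℤ) - 1) := by
      rw [Nat.cast_sum, Finset.sum_congr rfl hcast2, Finset.sum_sub_distrib,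
        Finset.sum_sub_distrib, hy0, hx1, hone]
    have hxlastN : (x ⟨k - 1, Nat.sub_lt hk one_pos⟩ : ℕ) < N := (x _).isLt
    have hc3 : ((N - 1 - (x ⟨k - 1, Nat.sub_lt hk one_pos⟩ : ℕ) : ℕ) : ℤ)
        = (N : ℤ) - 1 - ((x ⟨k - 1, Nat.sub_lt hk one_pos⟩ : ℕ) : ℤ) := by omega
    rw [hL, Nat.cast_add, Nat.cast_add, hfilter_sum, hc3]
    ring
  · intro hnI
    rw [hsubdet, aux_det_bidiag 𝔷 r c hrmono hcmono]
    have hnP : ¬ ∀ a, (r a : ℕ) ≤ (c a : ℕ) ∧ (c a : ℕ) ≤ (r a : ℕ) + 1 :=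
      fun hP => hnI (aux_bwd hx hy hrmono hcmono himr himc hP)
    push_neg at hnP
    obtain ⟨a, ha⟩ := hnP
    apply Finset.prod_eq_zero (mem_univ a)
    have h1 : (c a : ℕ) ≠ (r a : ℕ) + 1 := by
      intro he
      have := ha (by omega)
      omega
    have h2 : (c a : ℕ) ≠ (r a : ℕ) := by
      intro he
      have := ha (by omega)
      omega
    simp only [Matrix.add_apply, Matrix.smul_apply, Matrix.one_apply, Jmat, Matrix.of_apply,
      smul_eq_mul]
    rw [if_neg h1, if_neg (fun hfe => h2 (by rw [hfe]))]
    ring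
end
end

section
/- Let J_N be the N×N nilpotent matrix with (J_N)_{i,j} = 1 if j = i+1 and 0 otherwise, and let m_1,…,m_{2k} and n_1,…,n_{2k} be non-negative integers bounded by a fixed constant. If Σ_i m_i ≠ Σ_i n_i then tr[ J_N^{m_1} (J_N*)^{n_1} ⋯ J_N^{m_{2k}} (J_N*)^{n_{2k}} ] = 0 for every N; if Σ_i m_i = Σ_i n_i then (1/N) tr[ J_N^{m_1} (J_N*)^{n_1} ⋯ J_N^{m_{2k}} (J_N*)^{n_{2k}} ] → 1 as N → ∞. -/
/-!
`J_N^a (J_N^*)^b` is the matrix of the partial injection `p ↦ p + a - b` of `Fin N`, defined at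
least on `[b, N - a)`. A word in `J_N, J_N^*` is therefore the matrix of a partial injection that
moves every point by `∑ m - ∑ n` and is defined at least on `[∑ n, N - ∑ m)`, and its trace counts
the fixed points. With unequal sums there are none; with equal sums every point of the domain is
fixed, so the trace lies between `N - 2 ∑ m` and `N`.
-/

open Filter Finset Matrix

noncomputable section

namespace PEquiv

variable {n α : Type*} [DecidableEq n]

theorem conjTranspose_toMatrix [Semiring α] [StarRing α] (f : n ≃. n) :
    (f.toMatrix : Matrix n n α)ᴴ = f.symm.toMatrix := by
  ext i j
  simp [conjTranspose_apply, toMatrix_apply, mem_iff_mem f, apply_ite star]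

theorem trace_toMatrix [Fintype n] [AddCommMonoidWithOne α] (f : n ≃. n) :
    (f.toMatrix : Matrix n n α).trace = #{i | i ∈ f i} := by
  simp [Matrix.trace, toMatrix_apply, Finset.sum_boole]

end PEquiv

def shiftPEquiv (N a : ℕ) : Fin N ≃. Fin N where
  toFun p := if h : (p : ℕ) + a < N then some ⟨p + a, h⟩ else none
  invFun q := if h : a ≤ (q : ℕ) then some ⟨q - a, by omega⟩ else none
  inv p q := by
    constructor <;> intro h <;> split_ifs at h ⊢ <;> simp_all [Fin.ext_iff] <;> omega

@[simp]
theorem shiftPEquiv_eq_some {N a : ℕ} {p q : Fin N} :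
    shiftPEquiv N a p = some q ↔ (q : ℕ) = p + a := by
  simp only [shiftPEquiv, PEquiv.coe_mk]
  split_ifs with h <;> simp [Fin.ext_iff, eq_comm]
  omega

theorem shiftPEquiv_zero (N : ℕ) : shiftPEquiv N 0 = PEquiv.refl (Fin N) := by
  ext p q
  rw [shiftPEquiv_eq_some, PEquiv.refl_apply, Option.some_inj, Fin.ext_iff, eq_comm, add_zero]

theorem shiftPEquiv_trans (N a b : ℕ) :
    (shiftPEquiv N a).trans (shiftPEquiv N b) = shiftPEquiv N (a + b) := by
  ext p r
  simp only [PEquiv.trans_eq_some, shiftPEquiv_eq_some]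
  constructor
  · rintro ⟨q, hq, hr⟩
    omega
  · intro hr
    exact ⟨⟨p + a, by omega⟩, rfl, by simp only; omega⟩

theorem Jmat_eq_toMatrix (N : ℕ) : Jmat N = (shiftPEquiv N 1).toMatrix := by
  ext i j
  simp [Jmat, PEquiv.toMatrix_apply]

theorem Jmat_pow (N a : ℕ) : Jmat N ^ a = (shiftPEquiv N a).toMatrix := by
  induction a with
  | zero => rw [pow_zero, shiftPEquiv_zero, PEquiv.toMatrix_refl]
  | succ a ih => rw [pow_succ, ih, Jmat_eq_toMatrix, ← PEquiv.toMatrix_trans, shiftPEquiv_trans]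

theorem conjTranspose_Jmat_pow (N b : ℕ) : (Jmat N)ᴴ ^ b = (shiftPEquiv N b).symm.toMatrix := by
  rw [← conjTranspose_pow, Jmat_pow, PEquiv.conjTranspose_toMatrix]

structure IsPartialShift {N : ℕ} (f : Fin N ≃. Fin N) (a b : ℕ) : Prop where
  add_eq : ∀ p q, q ∈ f p → (q : ℕ) + b = p + a
  exists_mem : ∀ p : Fin N, b ≤ p → p + a < N → ∃ q, q ∈ f p

theorem isPartialShift_shiftPEquiv (N a : ℕ) : IsPartialShift (shiftPEquiv N a) a 0 where
  add_eq p q h := by simpa using h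
  exists_mem p _ h := ⟨⟨p + a, h⟩, by simp⟩

theorem isPartialShift_shiftPEquiv_symm (N b : ℕ) :
    IsPartialShift (shiftPEquiv N b).symm 0 b where
  add_eq p q h := (shiftPEquiv_eq_some.1 ((PEquiv.mem_iff_mem _).1 h)).symm
  exists_mem p h _ :=
    ⟨⟨p - b, by omega⟩, (PEquiv.mem_iff_mem _).2 (shiftPEquiv_eq_some.2 (by simp only; omega))⟩

namespace IsPartialShift

variable {N a b a' b' : ℕ} {f g : Fin N ≃. Fin N}

theorem refl : IsPartialShift (PEquiv.refl (Fin N)) 0 0 where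
  add_eq p q h := by simp_all
  exists_mem p _ _ := ⟨p, rfl⟩

theorem trans (hf : IsPartialShift f a b) (hg : IsPartialShift g a' b') :
    IsPartialShift (f.trans g) (a + a') (b + b') where
  add_eq p r h := by
    obtain ⟨q, hq, hr⟩ := (PEquiv.mem_trans f g p r).1 h
    have := hf.add_eq p q hq
    have := hg.add_eq q r hr
    omega
  exists_mem p hp hpN := by
    obtain ⟨q, hq⟩ := hf.exists_mem p (by omega) (by omega)
    have := hf.add_eq p q hq
    obtain ⟨r, hr⟩ := hg.exists_mem q (by omega) (by omega)
    exact ⟨r, (PEquiv.mem_trans f g p r).2 ⟨q, hq, hr⟩⟩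

theorem filter_mem_self_eq_empty (hf : IsPartialShift f a b) (hab : a ≠ b) :
    ({p | p ∈ f p} : Finset (Fin N)) = ∅ :=
  filter_eq_empty_iff.2 fun p _ hp => hab (by have := hf.add_eq p p hp; omega)

theorem le_card_filter_mem_self (hf : IsPartialShift f a b) (hab : a = b) :
    N ≤ #{p | p ∈ f p} + a + b := by
  have hsub : Ico b (N - a) ⊆ ({p | p ∈ f p} : Finset (Fin N)).map Fin.valEmbedding := by
    intro x hx
    obtain ⟨hbx, hxN⟩ := mem_Ico.1 hx
    obtain ⟨q, hq⟩ := hf.exists_mem ⟨x, by omega⟩ hbx (by simp only; omega)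
    have hqx : q = ⟨x, by omega⟩ := by
      have := hf.add_eq _ q hq
      ext
      simp only at this ⊢
      omega
    exact mem_map.2 ⟨_, mem_filter.2 ⟨mem_univ _, hqx ▸ hq⟩, rfl⟩
  have := card_le_card hsub
  rw [card_map, Nat.card_Ico] at this
  omega

end IsPartialShift

theorem exists_isPartialShift_prod_ofFn (N : ℕ) {r : ℕ} (m n : Fin r → ℕ) :
    ∃ f : Fin N ≃. Fin N,
      (List.ofFn fun i => Jmat N ^ m i * (Jmat N)ᴴ ^ n i).prod = f.toMatrix ∧
        IsPartialShift f (∑ i, m i) (∑ i, n i) := by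
  induction r with
  | zero => exact ⟨PEquiv.refl _, by simp, by simpa using IsPartialShift.refl⟩
  | succ r ih =>
    obtain ⟨g, hg, hgs⟩ := ih (fun i => m i.succ) (fun i => n i.succ)
    refine ⟨((shiftPEquiv N (m 0)).trans (shiftPEquiv N (n 0)).symm).trans g, ?_, ?_⟩
    · rw [List.ofFn_succ, List.prod_cons, hg, Jmat_pow, conjTranspose_Jmat_pow,
        PEquiv.toMatrix_trans, PEquiv.toMatrix_trans]
    · simpa [Fin.sum_univ_succ, add_assoc] using
        ((isPartialShift_shiftPEquiv N (m 0)).trans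
          (isPartialShift_shiftPEquiv_symm N (n 0))).trans hgs

theorem tendsto_inv_mul_of_le_of_le_add {c : ℕ → ℕ} (C : ℕ) (hle : ∀ N, c N ≤ N)
    (hge : ∀ N, N ≤ c N + C) : Tendsto (fun N : ℕ => (N : ℂ)⁻¹ * c N) atTop (nhds 1) := by
  rw [tendsto_iff_norm_sub_tendsto_zero]
  refine squeeze_zero' (Eventually.of_forall fun _ => norm_nonneg _) ?_
    (tendsto_const_div_atTop_nhds_zero_nat (C : ℝ))
  filter_upwards [eventually_ge_atTop 1] with N hN
  have hNpos : (0 : ℝ) < N := by exact_mod_cast hN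
  have hdiff : (N : ℂ)⁻¹ * c N - 1 = (((c N - N) / N : ℝ) : ℂ) := by
    have : (N : ℂ) ≠ 0 := by exact_mod_cast hNpos.ne'
    push_cast
    field_simp
  have hlo : ((N : ℕ) : ℝ) ≤ c N + C := by exact_mod_cast hge N
  have hhi : (c N : ℝ) ≤ N := by exact_mod_cast hle N
  rw [hdiff, Complex.norm_real, Real.norm_eq_abs, abs_div, abs_of_pos hNpos]
  gcongr
  exact abs_le.2 ⟨by linarith, by linarith⟩

theorem trace_shift_word_general
    (k : ℕ) (m n : Fin (2 * k) → ℕ) :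
    ((∑ i, m i) ≠ (∑ i, n i) →
      ∀ N : ℕ,
        ((List.ofFn (fun i : Fin (2 * k) => Jmat N ^ m i * ((Jmat N)ᴴ) ^ n i)).prod).trace
          = 0) ∧
    ((∑ i, m i) = (∑ i, n i) →
      Tendsto
        (fun N : ℕ => (N : ℂ)⁻¹ *
          ((List.ofFn (fun i : Fin (2 * k) => Jmat N ^ m i * ((Jmat N)ᴴ) ^ n i)).prod).trace)
        atTop (nhds 1)) := by
  choose f hprod hf using fun N => exists_isPartialShift_prod_ofFn N m n
  simp only [hprod, PEquiv.trace_toMatrix]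
  refine ⟨fun hne N => ?_, fun heq => ?_⟩
  · rw [(hf N).filter_mem_self_eq_empty hne, card_empty, Nat.cast_zero]
  · refine tendsto_inv_mul_of_le_of_le_add (2 * ∑ i, n i)
      (fun N => (card_filter_le _ _).trans (card_fin N).le) (fun N => ?_)
    have := (hf N).le_card_filter_mem_self heq
    omega

/-- **Balanced word traces.** For exponents `m_i, n_i` bounded by a fixed constant, the trace
of `J_N^{m_1} (J_N^*)^{n_1} ⋯ J_N^{m_{2k}} (J_N^*)^{n_{2k}}` vanishes if the word is not
balanced, and is `N(1 + o(1))` if it is balanced. -/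
theorem trace_shift_word
    (k B : ℕ) (m n : Fin (2 * k) → ℕ)
    (hm : ∀ i, m i ≤ B) (hn : ∀ i, n i ≤ B) :
    ((∑ i, m i) ≠ (∑ i, n i) →
      ∀ N : ℕ,
        ((List.ofFn (fun i : Fin (2 * k) => Jmat N ^ m i * ((Jmat N)ᴴ) ^ n i)).prod).trace
          = 0) ∧
    ((∑ i, m i) = (∑ i, n i) →
      Tendsto
        (fun N : ℕ => (N : ℂ)⁻¹ *
          ((List.ofFn (fun i : Fin (2 * k) => Jmat N ^ m i * ((Jmat N)ᴴ) ^ n i)).prod).trace)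
        atTop (nhds 1)) :=
  trace_shift_word_general k m n
end
end
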